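/- arXiv:0710.3004 — 4 statements merged into one kernel-verified Lean document; each statement's English description precedes it below -/
import Mathlib

section
/- Let U be a complete ultrametric space of diameter ≤ 1 and define T_U = (U × [0,∞))/∼ where (α,t) ∼ (β,t') iff t = t' and d(α,β) ≤ e^{-t}. Define D([x,t],[y,s]) = |t−s| if x and y satisfy d(x,y) ≤ e^{-min(t,s)}, and D([x,t],[y,s]) = t + s − 2·min{−ln d(x,y), t, s} otherwise. Then D is a well-defined metric on T_U. -/
/-!
Write `(p|q)` for the height `min{-ln d(x,y), t, s}` at which the branches of `p = [x,t]` and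
`q = [y,s]` separate, i.e. the Gromov product based at the root, so that
`D(p,q) = t + s - 2 (p|q)`. Then `τ ≤ (p|q)` iff `τ ≤ t`, `τ ≤ s` and `d(x,y) ≤ e^{-τ}`. In this
form the ultrametric inequality gives `min((p|q), (q|r)) ≤ (p|r)`, which together with
`(p|q), (q|r) ≤ u` (the height of `q = [z,u]`) is the triangle inequality. For `τ ≤ t` the
condition only involves the closed ball of radius `e^{-τ} ≥ e^{-t}` about `x`, and in an
ultrametric space that ball is the same about each of its points, so `(p|q)` respects `∼`.
-/

open NNReal

def treeRel (U : Type*) [MetricSpace U] (p q : U × ℝ≥0) : Prop :=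
  p.2 = q.2 ∧ dist p.1 q.1 ≤ Real.exp (-(p.2 : ℝ))

noncomputable def treeDist (U : Type*) [MetricSpace U] (p q : U × ℝ≥0) : ℝ :=
  if dist p.1 q.1 ≤ Real.exp (-(min (p.2 : ℝ) (q.2 : ℝ)))
  then |(p.2 : ℝ) - (q.2 : ℝ)|
  else (p.2 : ℝ) + (q.2 : ℝ) -
    2 * min (-Real.log (dist p.1 q.1)) (min (p.2 : ℝ) (q.2 : ℝ))

-- `min{-ln d(x,y), t, s}`; the case split keeps the junk value `Real.log 0 = 0` out.
noncomputable def treeGromovProduct (U : Type*) [MetricSpace U] (p q : U × ℝ≥0) : ℝ :=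
  if dist p.1 q.1 ≤ Real.exp (-(min (p.2 : ℝ) (q.2 : ℝ)))
  then min (p.2 : ℝ) (q.2 : ℝ)
  else -Real.log (dist p.1 q.1)

section TreeMetric

variable {U : Type*} [MetricSpace U]

theorem le_treeGromovProduct_iff (p q : U × ℝ≥0) (τ : ℝ) :
    τ ≤ treeGromovProduct U p q ↔
      τ ≤ p.2 ∧ τ ≤ q.2 ∧ dist p.1 q.1 ≤ Real.exp (-τ) := by
  unfold treeGromovProduct
  split_ifs with h
  · refine ⟨fun hτ => ⟨hτ.trans (min_le_left _ _), hτ.trans (min_le_right _ _), ?_⟩,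
      fun ⟨hp, hq, _⟩ => le_min hp hq⟩
    exact h.trans (Real.exp_le_exp.2 (neg_le_neg hτ))
  · have hfar : Real.exp (-(min (p.2 : ℝ) q.2)) < dist p.1 q.1 := not_le.1 h
    have hd : 0 < dist p.1 q.1 := (Real.exp_pos _).trans hfar
    rw [le_neg, Real.log_le_iff_le_exp hd]
    refine ⟨fun hτ => ?_, fun ⟨_, _, hτ⟩ => hτ⟩
    have hlt : τ < min (p.2 : ℝ) q.2 := neg_lt_neg_iff.1 (Real.exp_lt_exp.1 (hfar.trans_le hτ))
    exact ⟨hlt.le.trans (min_le_left _ _), hlt.le.trans (min_le_right _ _), hτ⟩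

theorem treeGromovProduct_le_left (p q : U × ℝ≥0) : treeGromovProduct U p q ≤ p.2 :=
  ((le_treeGromovProduct_iff p q _).1 le_rfl).1

theorem treeGromovProduct_le_right (p q : U × ℝ≥0) : treeGromovProduct U p q ≤ q.2 :=
  ((le_treeGromovProduct_iff p q _).1 le_rfl).2.1

theorem treeGromovProduct_comm (p q : U × ℝ≥0) :
    treeGromovProduct U p q = treeGromovProduct U q p :=
  eq_of_forall_le_iff fun τ => by
    rw [le_treeGromovProduct_iff, le_treeGromovProduct_iff, dist_comm, ← and_assoc,
      and_comm (a := τ ≤ p.2), and_assoc]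

theorem treeDist_eq_sub_treeGromovProduct (p q : U × ℝ≥0) :
    treeDist U p q = p.2 + q.2 - 2 * treeGromovProduct U p q := by
  unfold treeDist treeGromovProduct
  split_ifs with h
  · rw [← max_sub_min_eq_abs', ← min_add_max (p.2 : ℝ) q.2]
    ring
  · have hfar : Real.exp (-(min (p.2 : ℝ) q.2)) < dist p.1 q.1 := not_le.1 h
    have hd : 0 < dist p.1 q.1 := (Real.exp_pos _).trans hfar
    rw [min_eq_left]
    linarith [(Real.lt_log_iff_exp_lt hd).2 hfar]

theorem treeDist_comm (p q : U × ℝ≥0) : treeDist U p q = treeDist U q p := by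
  rw [treeDist_eq_sub_treeGromovProduct, treeDist_eq_sub_treeGromovProduct,
    treeGromovProduct_comm, add_comm (p.2 : ℝ)]

theorem treeRel_iff_le_treeGromovProduct (p q : U × ℝ≥0) :
    treeRel U p q ↔ p.2 ≤ treeGromovProduct U p q ∧ q.2 ≤ treeGromovProduct U p q := by
  rw [le_treeGromovProduct_iff, le_treeGromovProduct_iff, treeRel, ← NNReal.coe_inj]
  constructor
  · rintro ⟨hpq, hd⟩
    rw [← hpq]
    exact ⟨⟨le_rfl, le_rfl, hd⟩, le_rfl, le_rfl, hd⟩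
  · rintro ⟨⟨-, hpq, hd⟩, hqp, -⟩
    exact ⟨le_antisymm hpq hqp, hd⟩

theorem treeDist_eq_zero_iff (p q : U × ℝ≥0) : treeDist U p q = 0 ↔ treeRel U p q := by
  rw [treeRel_iff_le_treeGromovProduct, treeDist_eq_sub_treeGromovProduct]
  have hp := treeGromovProduct_le_left p q
  have hq := treeGromovProduct_le_right p q
  constructor
  · intro h
    constructor <;> linarith
  · rintro ⟨hp', hq'⟩
    linarith

variable [IsUltrametricDist U]

theorem min_treeGromovProduct_le (p q r : U × ℝ≥0) :
    min (treeGromovProduct U p q) (treeGromovProduct U q r) ≤ treeGromovProduct U p r := by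
  obtain ⟨hp, -, hpq⟩ := (le_treeGromovProduct_iff p q _).1 (min_le_left _ _)
  obtain ⟨-, hr, hqr⟩ := (le_treeGromovProduct_iff q r _).1 (min_le_right _ _)
  exact (le_treeGromovProduct_iff p r _).2
    ⟨hp, hr, (dist_triangle_max _ q.1 _).trans (max_le hpq hqr)⟩

theorem treeDist_triangle (p q r : U × ℝ≥0) :
    treeDist U p r ≤ treeDist U p q + treeDist U q r := by
  simp only [treeDist_eq_sub_treeGromovProduct]
  have hmax : max (treeGromovProduct U p q) (treeGromovProduct U q r) ≤ q.2 :=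
    max_le (treeGromovProduct_le_right p q) (treeGromovProduct_le_left q r)
  linarith [min_treeGromovProduct_le p q r, min_add_max (treeGromovProduct U p q)
    (treeGromovProduct U q r)]

theorem treeGromovProduct_congr_left {p p' : U × ℝ≥0} (h : treeRel U p p') (q : U × ℝ≥0) :
    treeGromovProduct U p q = treeGromovProduct U p' q :=
  eq_of_forall_le_iff fun τ => by
    obtain ⟨ht, hd⟩ := h
    rw [le_treeGromovProduct_iff, le_treeGromovProduct_iff, ← ht]
    refine and_congr_right fun hτ => and_congr_right fun _ => ?_
    have hball : p'.1 ∈ Metric.closedBall p.1 (Real.exp (-τ)) := by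
      rw [Metric.mem_closedBall, dist_comm]
      exact hd.trans (Real.exp_le_exp.2 (neg_le_neg hτ))
    rw [dist_comm p.1, dist_comm p'.1, ← Metric.mem_closedBall, ← Metric.mem_closedBall,
      IsUltrametricDist.closedBall_eq_of_mem hball]

theorem treeDist_congr {p p' q q' : U × ℝ≥0} (hp : treeRel U p p') (hq : treeRel U q q') :
    treeDist U p q = treeDist U p' q' := by
  rw [treeDist_eq_sub_treeGromovProduct, treeDist_eq_sub_treeGromovProduct,
    treeGromovProduct_congr_left hp, treeGromovProduct_comm, treeGromovProduct_congr_left hq,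
    treeGromovProduct_comm, hp.1, hq.1]

end TreeMetric

theorem treeDist_wellDefined_metric_general (U : Type*) [MetricSpace U]
    (hu : ∀ x y z : U, dist x y ≤ max (dist x z) (dist z y)) :
    (∀ p p' q q' : U × ℝ≥0, treeRel U p p' → treeRel U q q' →
        treeDist U p q = treeDist U p' q') ∧
    (∀ p q : U × ℝ≥0, treeDist U p q = 0 ↔ treeRel U p q) ∧
    (∀ p q : U × ℝ≥0, treeDist U p q = treeDist U q p) ∧
    (∀ p q r : U × ℝ≥0, treeDist U p r ≤ treeDist U p q + treeDist U q r) := by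
  have : IsUltrametricDist U := ⟨fun x y z => hu x z y⟩
  exact ⟨fun _ _ _ _ => treeDist_congr, treeDist_eq_zero_iff, treeDist_comm, treeDist_triangle⟩

/-- For a complete ultrametric space `U` of diameter at most `1`, the formula
`D` is a well-defined metric on the quotient `T_U = (U × [0,∞))/∼`. -/
theorem treeDist_wellDefined_metric (U : Type*) [MetricSpace U]
    [CompleteSpace U]
    (hu : ∀ x y z : U, dist x y ≤ max (dist x z) (dist z y))
    (hdiam : Metric.diam (Set.univ : Set U) ≤ 1) :
    (∀ p p' q q' : U × ℝ≥0, treeRel U p p' → treeRel U q q' →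
        treeDist U p q = treeDist U p' q') ∧
    (∀ p q : U × ℝ≥0, treeDist U p q = 0 ↔ treeRel U p q) ∧
    (∀ p q : U × ℝ≥0, treeDist U p q = treeDist U q p) ∧
    (∀ p q r : U × ℝ≥0, treeDist U p r ≤ treeDist U p q + treeDist U q r) :=
  treeDist_wellDefined_metric_general U hu
end

section
/- Let (T,v) be a rooted ℝ-tree and suppose f : (T,v) → (T',w) is a rooted continuous metrically proper map. Suppose M, N > 0 satisfy f⁻¹(B(w,M)) ⊆ B(v,N). Then for every point c with d(v,c) = N there exists a unique point c' with d(w,c') = M such that f(T_c) ⊆ T'_{c'}, where T_c = {x ∈ T : c ∈ [v,x]} is the subtree determined by c. -/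
open NNReal

/-- An `ℝ`-tree: a metric space that is uniquely arcwise connected and in which
any two points are joined by a geodesic segment isometric to a real interval. -/
def IsRTree (T : Type*) [MetricSpace T] : Prop :=
  (∀ x y : T, ∃ γ : ℝ → T, γ 0 = x ∧ γ (dist x y) = y ∧
      ∀ s ∈ Set.Icc (0:ℝ) (dist x y), ∀ t ∈ Set.Icc (0:ℝ) (dist x y),
        dist (γ s) (γ t) = |s - t|) ∧
  (∀ x y : T, ∀ γ₁ γ₂ : Path x y, Function.Injective γ₁ → Function.Injective γ₂ →
      Set.range γ₁ = Set.range γ₂)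

/-!
Throughout, `y ∈ [x, z]` is written metrically as `dist x y + dist y z = dist x z`; in an
ℝ-tree this metric segment is the unique arc from `x` to `z`.

Points at distance at least `N` from `v` are mapped outside `B(w, M)`. The subtree `T_c`
contains `[c, x]` for each of its points `x`, so it is path connected, and it lies outside
`B(v, N)`; hence `f(T_c)` is a connected set outside `B(w, M)`. In an ℝ-tree a connected set
contains the arc between any two of its points, since a point `y` of `[a, b]` splits the tree
into the disjoint open sets `{z ≠ y | y ∈ [a, z]}` and `{z | y ∉ [a, z]}`. So for `x ∈ T_c`
the centre of the tripod `w, f c, f x` lies outside `B(w, M)`, and the point `c'` of `[w, f c]`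
at distance `M` from `w` also lies on `[w, f x]`. It is unique because a point of `[w, f c]`
is determined by its distance from `w`.
-/

open Set Function

section Metric

variable {X : Type*} [MetricSpace X]

theorem dist_add_dist_eq_trans {w a b c : X} (hab : dist w a + dist a b = dist w b)
    (hbc : dist w b + dist b c = dist w c) : dist w a + dist a c = dist w c := by
  linarith [dist_triangle a b c, dist_triangle w a c]

theorem dist_add_dist_eq_trans_right {v c x p : X} (hcx : dist v c + dist c x = dist v x)
    (hp : dist c p + dist p x = dist c x) : dist v c + dist c p = dist v p := by
  linarith [dist_triangle v c p, dist_triangle v p x]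

theorem eq_of_dist_add_dist_eq {x y z p : X} (hxy : dist x p + dist p y = dist x y)
    (hyz : dist y p + dist p z = dist y z) (hxz : dist x y + dist y z = dist x z) : p = y := by
  exact dist_eq_zero.mp <| by
    linarith [dist_triangle x p z, dist_comm y p, dist_nonneg (x := p) (y := y)]

theorem Path.injective_of_dist_eq {x z : X} (p : Path x z) (hxz : x ≠ z)
    (hp : ∀ t, dist x (p t) = t * dist x z) : Injective p := fun s t hst =>
  Subtype.ext <| mul_right_cancel₀ (dist_pos.mpr hxz).ne' <| by rw [← hp, ← hp, hst]

end Metric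

theorem Path.injective_trans {X : Type*} [TopologicalSpace X] {x y z : X} {p : Path x y}
    {q : Path y z} (hp : Injective p) (hq : Injective q)
    (hpq : ∀ s t, p s = q t → p s = y) : Injective (p.trans q) := by
  have hjunction : ∀ s t, p s = q t → (s : ℝ) = 1 ∧ (t : ℝ) = 0 := fun s t h => by
    have hs := hp ((hpq s t h).trans p.target.symm)
    have ht := hq (h.symm.trans ((hpq s t h).trans q.source.symm))
    simp [hs, ht]
  intro s t hst
  simp only [Path.trans_apply] at hst
  split_ifs at hst with hs ht ht
  · exact Subtype.ext (by simpa using congrArg Subtype.val (hp hst))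
  · have := hjunction _ _ hst
    simp only at this
    linarith
  · have := hjunction _ _ hst.symm
    simp only at this
    linarith
  · exact Subtype.ext (by simpa using congrArg Subtype.val (hq hst))

namespace IsRTree

variable {T : Type*} [MetricSpace T]

theorem exists_dist_eq_between (hT : IsRTree T) {x z : T} {r : ℝ} (h0 : 0 ≤ r)
    (hr : r ≤ dist x z) : ∃ y, dist x y = r ∧ dist x y + dist y z = dist x z := by
  obtain ⟨γ, hγ0, hγD, hγ⟩ := hT.1 x z
  have hD : 0 ≤ dist x z := dist_nonneg
  have h1 := hγ 0 ⟨le_rfl, hD⟩ r ⟨h0, hr⟩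
  have h2 := hγ r ⟨h0, hr⟩ _ ⟨hD, le_rfl⟩
  rw [hγ0, zero_sub, abs_neg, abs_of_nonneg h0] at h1
  rw [hγD, abs_of_nonpos (by linarith)] at h2
  exact ⟨γ r, h1, by linarith⟩

theorem exists_geodesic (hT : IsRTree T) (x z : T) :
    ∃ p : Path x z, ∀ t : unitInterval,
      dist x (p t) = t * dist x z ∧ dist (p t) z = (1 - t) * dist x z := by
  obtain ⟨γ, hγ0, hγD, hγ⟩ := hT.1 x z
  set D := dist x z
  have hD : 0 ≤ D := dist_nonneg
  have hmem : ∀ t : unitInterval, (t : ℝ) * D ∈ Icc 0 D := fun t =>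
    ⟨mul_nonneg t.2.1 hD, mul_le_of_le_one_left hD t.2.2⟩
  have hcont : ContinuousOn γ (Icc 0 D) :=
    (LipschitzOnWith.of_dist_le' (K := 1) fun s hs t ht => by
      rw [hγ s hs t ht, one_mul, Real.dist_eq]).continuousOn
  refine ⟨⟨⟨fun t => γ (t * D), hcont.comp_continuous (by fun_prop) hmem⟩,
    by simp [hγ0], by simp [hγD]⟩, fun t => ?_⟩
  have h1 := hγ 0 ⟨le_rfl, hD⟩ _ (hmem t)
  have h2 := hγ _ (hmem t) D ⟨hD, le_rfl⟩
  rw [hγ0, zero_sub, abs_neg, abs_of_nonneg (hmem t).1] at h1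
  rw [hγD, abs_of_nonpos (by linarith [(hmem t).2])] at h2
  exact ⟨h1, by simp only [Path.coe_mk_mk] at h2 ⊢; rw [h2]; ring⟩

theorem exists_injective_path (hT : IsRTree T) {x z : T} (hxz : x ≠ z) :
    ∃ p : Path x z, Injective p ∧ ∀ t, dist x (p t) + dist (p t) z = dist x z := by
  obtain ⟨p, hp⟩ := hT.exists_geodesic x z
  refine ⟨p, p.injective_of_dist_eq hxz fun t => (hp t).1, fun t => ?_⟩
  rw [(hp t).1, (hp t).2]
  ring

theorem range_eq_of_injective (hT : IsRTree T) {x z : T} {p : Path x z} (hp : Injective p) :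
    range p = {y | dist x y + dist y z = dist x z} := by
  have hxz : x ≠ z := fun h => by
    simpa using congrArg Subtype.val (hp (p.source.trans (h.trans p.target.symm)))
  obtain ⟨q, hq, hqy⟩ := hT.exists_injective_path hxz
  ext y
  constructor
  · rw [hT.2 x z p q hp hq]
    rintro ⟨t, rfl⟩
    exact hqy t
  · intro hy
    by_cases hyx : y = x
    · exact hyx ▸ p.source_mem_range
    by_cases hyz : y = z
    · exact hyz ▸ p.target_mem_range
    obtain ⟨q₁, hq₁, hq₁y⟩ := hT.exists_injective_path (Ne.symm hyx)
    obtain ⟨q₂, hq₂, hq₂y⟩ := hT.exists_injective_path hyz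
    -- concatenating geodesics `[x, y]` and `[y, z]` gives an arc through `y`
    have hinj := Path.injective_trans hq₁ hq₂ fun s t h =>
      eq_of_dist_add_dist_eq (hq₁y s) (by rw [h]; exact hq₂y t) hy
    rw [hT.2 x z p _ hp hinj, Path.trans_range]
    exact Or.inl q₁.target_mem_range

theorem eq_of_dist_eq_of_between (hT : IsRTree T) {x z y₁ y₂ : T}
    (h₁ : dist x y₁ + dist y₁ z = dist x z) (h₂ : dist x y₂ + dist y₂ z = dist x z)
    (hd : dist x y₁ = dist x y₂) : y₁ = y₂ := by
  by_cases hxz : x = z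
  · subst hxz
    have h0 : dist x y₁ = 0 := by
      rw [dist_comm y₁, dist_self] at h₁
      linarith
    exact (dist_eq_zero.mp h0).symm.trans (dist_eq_zero.mp (hd ▸ h0 : dist x y₂ = 0))
  obtain ⟨p, hp⟩ := hT.exists_geodesic x z
  have hrange := hT.range_eq_of_injective (p.injective_of_dist_eq hxz fun t => (hp t).1)
  obtain ⟨s, rfl⟩ : y₁ ∈ range p := hrange ▸ h₁
  obtain ⟨t, rfl⟩ : y₂ ∈ range p := hrange ▸ h₂
  rw [(hp s).1, (hp t).1] at hd
  rw [Subtype.ext (mul_right_cancel₀ (dist_pos.mpr hxz).ne' hd)]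

theorem between_of_isMinOn (hT : IsRTree T) {a b m w : T}
    (hm : dist a m + dist m b = dist a b)
    (hmin : IsMinOn (dist w) {p | dist a p + dist p b = dist a b} m) :
    dist a m + dist m w = dist a w := by
  by_cases ham : a = m
  · subst ham
    simp
  by_cases hmw : m = w
  · subst hmw
    simp
  obtain ⟨p, hp, hpm⟩ := hT.exists_injective_path ham
  obtain ⟨q, hq, hqw⟩ := hT.exists_injective_path hmw
  -- points of `[m, w]` other than `m` are closer to `w` than `m` is, so they miss `[a, m]`
  have hinj := Path.injective_trans hp hq fun s t h => by
    have hle := isMinOn_iff.mp hmin _ (dist_add_dist_eq_trans (hpm s) hm)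
    have hmq := hqw t
    rw [← h, dist_comm (p s) w] at hmq
    exact (dist_le_zero.mp (by linarith [dist_comm m w])).symm
  have hmem : m ∈ range (p.trans q) := by
    rw [Path.trans_range]
    exact Or.inl p.target_mem_range
  rwa [hT.range_eq_of_injective hinj] at hmem

theorem exists_tripod_center (hT : IsRTree T) (x y z : T) :
    ∃ m, dist x m + dist m y = dist x y ∧ dist x m + dist m z = dist x z ∧
      dist y m + dist m z = dist y z := by
  by_cases hyz : y = z
  · subst hyz
    exact ⟨y, by simp, by simp, by simp⟩
  obtain ⟨p, hp, -⟩ := hT.exists_injective_path hyz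
  obtain ⟨m, hm, hmin⟩ := (isCompact_range p.continuous).exists_isMinOn (range_nonempty p)
    (continuous_const.dist continuous_id : Continuous (dist x)).continuousOn
  rw [hT.range_eq_of_injective hp, mem_ofPred_eq] at hm
  rw [hT.range_eq_of_injective hp] at hmin
  have hseg : {q | dist z q + dist q y = dist z y} = {q | dist y q + dist q z = dist y z} := by
    ext q
    simp only [mem_ofPred_eq]
    rw [dist_comm z q, dist_comm q y, dist_comm z y, add_comm]
  have hmy := hT.between_of_isMinOn hm hmin
  have hmz := hT.between_of_isMinOn (a := z) (b := y)
    (by linarith [dist_comm z m, dist_comm m y, dist_comm z y]) (hseg ▸ hmin)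
  exact ⟨m, by linarith [dist_comm x m, dist_comm m y, dist_comm x y],
    by linarith [dist_comm x m, dist_comm m z, dist_comm x z], hm⟩

theorem between_of_dist_le (hT : IsRTree T) {x u y m : T}
    (hy : dist x y + dist y u = dist x u) (hm : dist x m + dist m u = dist x u)
    (hle : dist x y ≤ dist x m) : dist x y + dist y m = dist x m := by
  obtain ⟨y', hy'd, hy'⟩ := hT.exists_dist_eq_between dist_nonneg hle
  obtain rfl := hT.eq_of_dist_eq_of_between (dist_add_dist_eq_trans hy' hm) hy hy'd
  exact hy'

theorem between_of_dist_lt (hT : IsRTree T) {a y z z₀ : T}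
    (hy : dist a y + dist y z₀ = dist a z₀) (hz : dist z z₀ < dist y z₀) :
    dist a y + dist y z = dist a z := by
  obtain ⟨m, ham, ham₀, hzm⟩ := hT.exists_tripod_center a z z₀
  have hya := hT.between_of_dist_le hy ham₀ (by linarith [dist_nonneg (x := z) (y := m)])
  exact dist_add_dist_eq_trans hya ham

theorem isOpen_between_diff (hT : IsRTree T) (a y : T) :
    IsOpen ({z | dist a y + dist y z = dist a z} \ {y}) := by
  rw [Metric.isOpen_iff]
  rintro z₀ ⟨hz₀, hne⟩
  refine ⟨dist y z₀, dist_pos.mpr (Ne.symm hne), fun z hz => ⟨?_, ?_⟩⟩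
  · exact hT.between_of_dist_lt hz₀ hz
  · rintro rfl
    exact lt_irrefl _ (Metric.mem_ball.mp hz)

theorem mem_of_isPreconnected_of_between (hT : IsRTree T) {S : Set T} (hS : IsPreconnected S)
    {a b y : T} (ha : a ∈ S) (hb : b ∈ S) (hy : dist a y + dist y b = dist a b) : y ∈ S := by
  by_contra hyS
  set V := {z | dist a y + dist y z = dist a z}
  have hVc : IsOpen Vᶜ := (isClosed_eq (by fun_prop) (by fun_prop)).isOpen_compl
  have haV : a ∉ V := fun h => by
    have hay : dist a y = 0 := by
      simp only [V, mem_ofPred_eq, dist_self, dist_comm y a] at h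
      linarith
    exact hyS (dist_eq_zero.mp hay ▸ ha)
  have hcover : S ⊆ Vᶜ ∪ V \ {y} := fun z hz => by
    by_cases hzV : z ∈ V
    · exact Or.inr ⟨hzV, fun h => hyS (h ▸ hz)⟩
    · exact Or.inl hzV
  obtain ⟨z, -, hzV, hzV'⟩ := hS _ _ hVc (hT.isOpen_between_diff a y) hcover ⟨a, ha, haV⟩
    ⟨b, hb, hy, fun h => hyS (h ▸ hb)⟩
  exact hzV hzV'.1

theorem between_of_isPreconnected (hT : IsRTree T) {S : Set T} (hS : IsPreconnected S)
    {w c a b : T} (hSw : ∀ z ∈ S, dist w c ≤ dist w z) (ha : a ∈ S) (hb : b ∈ S)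
    (hc : dist w c + dist c a = dist w a) : dist w c + dist c b = dist w b := by
  obtain ⟨m, hma, hmb, hab⟩ := hT.exists_tripod_center w a b
  have hmS := hT.mem_of_isPreconnected_of_between hS ha hb hab
  exact dist_add_dist_eq_trans (hT.between_of_dist_le hc hma (hSw m hmS)) hmb

theorem isPathConnected_subtree (hT : IsRTree T) (v c : T) :
    IsPathConnected {x | dist v c + dist c x = dist v x} := by
  refine ⟨c, by simp, fun x hx => ?_⟩
  obtain ⟨p, hp⟩ := hT.exists_geodesic c x
  refine ⟨p, fun t => dist_add_dist_eq_trans_right hx ?_⟩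
  rw [(hp t).1, (hp t).2]
  ring

end IsRTree

theorem image_of_subtrees_general {T T' : Type*} [MetricSpace T] [MetricSpace T']
    (hT : IsRTree T) (hT' : IsRTree T') (v : T) (w : T')
    (f : T → T') (hfc : Continuous f)
    (M N : ℝ) (hM : 0 < M)
    (hball : f ⁻¹' Metric.ball w M ⊆ Metric.ball v N) :
    ∀ c : T, dist v c = N →
      ∃! c' : T', dist w c' = M ∧
        ∀ x : T, dist v c + dist c x = dist v x →
          dist w c' + dist c' (f x) = dist w (f x) := by
  intro c hc
  have hfar : ∀ x, N ≤ dist v x → M ≤ dist w (f x) := fun x hx => by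
    by_contra! h
    have hvx := hball (show f x ∈ Metric.ball w M by rwa [Metric.mem_ball, dist_comm])
    rw [Metric.mem_ball, dist_comm] at hvx
    linarith
  obtain ⟨c', hc'M, hc'⟩ := hT'.exists_dist_eq_between hM.le (hfar c hc.ge)
  have himage : ∀ y ∈ f '' {x | dist v c + dist c x = dist v x}, dist w c' ≤ dist w y := by
    rintro _ ⟨x, hx, rfl⟩
    have hvx : dist v c + dist c x = dist v x := hx
    exact hc'M ▸ hfar x (by linarith [dist_nonneg (x := c) (y := x)])
  refine ⟨c', ⟨hc'M, fun x hx => ?_⟩, fun c'' ⟨hc''M, hc''⟩ => ?_⟩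
  · exact hT'.between_of_isPreconnected
      ((hT.isPathConnected_subtree v c).image hfc).isConnected.isPreconnected himage
      ⟨c, by simp, rfl⟩ ⟨x, hx, rfl⟩ hc'
  · exact hT'.eq_of_dist_eq_of_between (hc'' c (by simp)) hc' (hc''M.trans hc'M.symm)

/-- If `f : (T,v) → (T',w)` is a rooted continuous metrically proper map between
rooted `ℝ`-trees and `f⁻¹(B(w,M)) ⊆ B(v,N)`, then for every `c` at distance `N`
from the root there is a unique `c'` at distance `M` from `w` with
`f(T_c) ⊆ T'_{c'}`.  Here `T_c = {x : c ∈ [v,x]}` is described metrically by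
`d(v,c) + d(c,x) = d(v,x)`. -/
theorem image_of_subtrees {T T' : Type*} [MetricSpace T] [MetricSpace T']
    (hT : IsRTree T) (hT' : IsRTree T') (v : T) (w : T')
    (f : T → T') (hfc : Continuous f) (hfroot : f v = w)
    (hproper : ∀ A : Set T', Bornology.IsBounded A → Bornology.IsBounded (f ⁻¹' A))
    (M N : ℝ) (hM : 0 < M) (hN : 0 < N)
    (hball : f ⁻¹' Metric.ball w M ⊆ Metric.ball v N) :
    ∀ c : T, dist v c = N →
      ∃! c' : T', dist w c' = M ∧
        ∀ x : T, dist v c + dist c x = dist v x →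
          dist w c' + dist c' (f x) = dist w (f x) :=
  image_of_subtrees_general hT hT' v w f hfc M N hM hball
end

section
/- Let (T,v) be a rooted ℝ-tree. Then there exists a unique maximal geodesically complete rooted subtree (T_∞, v) of (T,v); that is, a subtree containing v that is geodesically complete and contains every geodesically complete subtree of (T,v) rooted at v. -/
/-
The geodesically complete rooted subtrees are closed under nonempty unions: a point of the
union lies in one of them, which already provides its arc to the root and a ray through it.
Since `{v}` is such a subtree, the union of all of them is the greatest one, and a greatest
element is unique.
-/

open NNReal

/-- A geodesically complete rooted subtree of `(T,v)`: it contains the root,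
it contains the arc `[v,x]` to each of its points (characterized metrically),
and every point of it other than the root lies on a geodesic ray from the root
contained in the subtree. -/
def IsGeodCompleteSubtree {T : Type*} [MetricSpace T] (v : T) (S : Set T) : Prop :=
  v ∈ S ∧
  (∀ x ∈ S, ∀ y : T, dist v y + dist y x = dist v x → y ∈ S) ∧
  (∀ x ∈ S, x ≠ v → ∃ f : ℝ≥0 → T, Isometry f ∧ f 0 = v ∧
      x ∈ Set.range f ∧ Set.range f ⊆ S)

section

variable {T : Type*} [MetricSpace T]

theorem isGeodCompleteSubtree_singleton (v : T) : IsGeodCompleteSubtree v {v} := by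
  refine ⟨rfl, fun x hx y hy => ?_, fun x hx hne => absurd hx hne⟩
  rw [Set.mem_singleton_iff] at hx ⊢
  rw [hx, dist_self] at hy
  exact dist_eq_zero.mp ((add_eq_zero_iff_of_nonneg dist_nonneg dist_nonneg).mp hy).2

theorem IsGeodCompleteSubtree.sUnion {v : T} {𝒮 : Set (Set T)} (hne : 𝒮.Nonempty)
    (h𝒮 : ∀ S ∈ 𝒮, IsGeodCompleteSubtree v S) : IsGeodCompleteSubtree v (⋃₀ 𝒮) := by
  obtain ⟨S₀, hS₀⟩ := hne
  refine ⟨⟨S₀, hS₀, (h𝒮 S₀ hS₀).1⟩, ?_, ?_⟩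
  · rintro x ⟨S, hS, hxS⟩ y hy
    exact ⟨S, hS, (h𝒮 S hS).2.1 x hxS y hy⟩
  · rintro x ⟨S, hS, hxS⟩ hxv
    obtain ⟨f, hf, hf0, hxf, hfS⟩ := (h𝒮 S hS).2.2 x hxS hxv
    exact ⟨f, hf, hf0, hxf, hfS.trans (Set.subset_sUnion_of_mem hS)⟩

end

theorem exists_unique_maximal_geodesically_complete_subtree_general
    {T : Type*} [MetricSpace T] (v : T) :
    ∃! S : Set T, IsGeodCompleteSubtree v S ∧
      ∀ S' : Set T, IsGeodCompleteSubtree v S' → S' ⊆ S := by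
  have hgreatest : IsGreatest {S | IsGeodCompleteSubtree v S}
      (⋃₀ {S | IsGeodCompleteSubtree v S}) :=
    ⟨.sUnion ⟨{v}, isGeodCompleteSubtree_singleton v⟩ fun _ hS => hS,
      fun _ => Set.subset_sUnion_of_mem⟩
  exact ⟨_, hgreatest, fun S (hS : IsGreatest _ S) => hS.unique hgreatest⟩

/-- Every rooted `ℝ`-tree has a unique maximal geodesically complete rooted
subtree. -/
theorem exists_unique_maximal_geodesically_complete_subtree
    {T : Type*} [MetricSpace T] (hT : IsRTree T) (v : T) :
    ∃! S : Set T, IsGeodCompleteSubtree v S ∧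
      ∀ S' : Set T, IsGeodCompleteSubtree v S' → S' ⊆ S :=
  exists_unique_maximal_geodesically_complete_subtree_general v
end

section
/- An inverse sequence (X_n, p_n) of sets is Mittag-Leffler if and only if it is isomorphic in the category Tower-Set to an inverse sequence with surjective bonding maps. -/
/-- Composite bonding map `p_{n m} : X_m → X_n` (for `n ≤ m`) of an inverse
sequence `(X_n, p_n)`. -/
def tbond (X : ℕ → Type u) (p : ∀ n, X (n + 1) → X n) {n m : ℕ} (h : n ≤ m) :
    X m → X n :=
  Nat.leRecOn h (fun {k} (g : X k → X n) (x : X (k + 1)) => g (p k x)) id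

/-- The Mittag-Leffler property for an inverse sequence of sets: for every
`n₀` there is `n₁ > n₀` such that the image of `X_n` in `X_{n₀}` equals the
image of `X_{n₁}` in `X_{n₀}` for all `n > n₁`. -/
def IsML (X : ℕ → Type u) (p : ∀ n, X (n + 1) → X n) : Prop :=
  ∀ n₀ : ℕ, ∃ n₁ : ℕ, ∃ h₁ : n₀ < n₁, ∀ n : ℕ, ∀ h : n₁ < n,
    Set.range (tbond X p (h₁.le.trans h.le)) = Set.range (tbond X p h₁.le)

/-- A morphism of inverse sequences `(X_n,p_n) → (Y_n,q_n)` in `Tower-Set`: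
an index function `idx` together with maps `f n : X_{idx n} → Y n` satisfying
the usual coherence condition after composing with high enough bonding maps. -/
structure TowerMor (X : ℕ → Type u) (p : ∀ n, X (n + 1) → X n)
    (Y : ℕ → Type v) (q : ∀ n, Y (n + 1) → Y n) where
  idx : ℕ → ℕ
  f : ∀ n, X (idx n) → Y n
  coh : ∀ n n' : ℕ, ∀ h : n ≤ n', ∃ m : ℕ, ∃ h1 : idx n ≤ m, ∃ h2 : idx n' ≤ m,
    ∀ x : X m, f n (tbond X p h1 x) = tbond Y q h (f n' (tbond X p h2 x))

/-- Two inverse sequences are isomorphic in `Tower-Set` if there are morphisms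
in both directions whose composites are equivalent to the identity morphisms
(equality after composing with sufficiently high bonding maps). -/
def TowerIso (X : ℕ → Type u) (p : ∀ n, X (n + 1) → X n)
    (Y : ℕ → Type v) (q : ∀ n, Y (n + 1) → Y n) : Prop :=
  ∃ (F : TowerMor X p Y q) (G : TowerMor Y q X p),
    (∀ n : ℕ, ∃ m : ℕ, ∃ h1 : F.idx (G.idx n) ≤ m, ∃ h2 : n ≤ m,
      ∀ x : X m, G.f n (F.f (G.idx n) (tbond X p h1 x)) = tbond X p h2 x) ∧
    (∀ n : ℕ, ∃ m : ℕ, ∃ h1 : G.idx (F.idx n) ≤ m, ∃ h2 : n ≤ m,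
      ∀ y : Y m, F.f n (G.f (F.idx n) (tbond Y q h1 y)) = tbond Y q h2 y)

/-!
The stable images `⋂_{m ≥ n} p_{nm}(X_m)` always form a subtower of `(X_n, p_n)`. Under the
Mittag-Leffler condition the stable image at level `n` is a single image `p_{n N(n)}(X_{N(n)})`;
this makes the bonding maps between stable images surjective and makes the maps
`p_{n N(n)}` and the inclusions mutually inverse in `Tower-Set`. Conversely, if `G : Y → X` is
part of an isomorphism with a surjective tower `Y`, the image of `G_n` lies in every image
`p_{nm}(X_m)`, while `G ∘ F ≃ id` puts some `p_{n m₀}(X_{m₀})` inside the image of `G_n`.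
-/

open Set Function

universe u v

section Bonding

variable {X : ℕ → Type u} {p : ∀ n, X (n + 1) → X n}

theorem tbond_self {n : ℕ} (h : n ≤ n) (x : X n) : tbond X p h x = x :=
  congrFun (Nat.leRecOn_self (C := fun k => X k → X n) id) x

theorem tbond_succ {n m : ℕ} (h : n ≤ m) (h' : n ≤ m + 1) (x : X (m + 1)) :
    tbond X p h' x = tbond X p h (p m x) :=
  congrFun (Nat.leRecOn_succ (C := fun k => X k → X n) h (h2 := h') id) x

theorem tbond_tbond {n m k : ℕ} (h₁ : n ≤ m) (h₂ : m ≤ k) (x : X k) :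
    tbond X p h₁ (tbond X p h₂ x) = tbond X p (h₁.trans h₂) x := by
  induction k, h₂ using Nat.le_induction with
  | base => rw [tbond_self]
  | succ k hmk ih => rw [tbond_succ hmk, tbond_succ (h₁.trans hmk), ih]

theorem p_tbond {n m : ℕ} (h : n + 1 ≤ m) (x : X m) :
    p n (tbond X p h x) = tbond X p (n.le_succ.trans h) x := by
  rw [← tbond_tbond n.le_succ h, tbond_succ le_rfl, tbond_self]

theorem range_tbond_subset {n m k : ℕ} (h₁ : n ≤ m) (h₂ : n ≤ k) (hmk : m ≤ k) :
    range (tbond X p h₂) ⊆ range (tbond X p h₁) := by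
  rintro _ ⟨x, rfl⟩
  exact ⟨tbond X p hmk x, tbond_tbond h₁ hmk x⟩

theorem tbond_surjective (hp : ∀ n, Surjective (p n)) {n m : ℕ} (h : n ≤ m) :
    Surjective (tbond X p h) := by
  induction m, h using Nat.le_induction with
  | base => exact fun x => ⟨x, tbond_self _ x⟩
  | succ m hnm ih =>
    have hcomp : tbond X p (hnm.trans m.le_succ) = tbond X p hnm ∘ p m :=
      funext (tbond_succ hnm _)
    rw [hcomp]
    exact ih.comp (hp m)

end Bonding

def stableRange (X : ℕ → Type u) (p : ∀ n, X (n + 1) → X n) (n : ℕ) : Set (X n) :=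
  ⋂ (m : ℕ) (h : n ≤ m), range (tbond X p h)

section StableRange

variable {X : ℕ → Type u} {p : ∀ n, X (n + 1) → X n}

theorem stableRange_subset_range_tbond {n m : ℕ} (h : n ≤ m) :
    stableRange X p n ⊆ range (tbond X p h) :=
  iInter₂_subset m h

theorem mapsTo_stableRange (n : ℕ) :
    MapsTo (p n) (stableRange X p (n + 1)) (stableRange X p n) := by
  intro x hx
  refine mem_iInter₂.2 fun m hm => ?_
  obtain ⟨z, rfl⟩ := stableRange_subset_range_tbond (Nat.succ_le_succ hm) hx
  exact ⟨p m z, by rw [p_tbond (p := p), tbond_succ hm]⟩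

theorem surjOn_stableRange {n N : ℕ} (hN : n + 1 ≤ N)
    (hNS : range (tbond X p hN) ⊆ stableRange X p (n + 1)) :
    SurjOn (p n) (stableRange X p (n + 1)) (stableRange X p n) := by
  intro y hy
  obtain ⟨z, rfl⟩ := stableRange_subset_range_tbond (n.le_succ.trans hN) hy
  exact ⟨tbond X p hN z, hNS (mem_range_self z), p_tbond hN z⟩

theorem isML_iff_exists_range_tbond_subset_stableRange :
    IsML X p ↔ ∀ n, ∃ N, ∃ hN : n ≤ N, range (tbond X p hN) ⊆ stableRange X p n := by
  simp only [stableRange, subset_iInter_iff]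
  constructor
  · intro hML n
    obtain ⟨N, hnN, hN⟩ := hML n
    refine ⟨N, hnN.le, fun m hm => ?_⟩
    rcases le_or_gt m N with hmN | hNm
    · exact range_tbond_subset hm hnN.le hmN
    · exact (hN m hNm).symm.subset
  · intro h n
    obtain ⟨N, hnN, hN⟩ := h n
    have hstable : ∀ k (hk : N ≤ k),
        range (tbond X p (hnN.trans hk)) = range (tbond X p hnN) := fun k hk =>
      (range_tbond_subset hnN _ hk).antisymm (hN k _)
    exact ⟨N + 1, Nat.lt_succ_of_le hnN, fun m hm =>
      (hstable m (by omega)).trans (hstable (N + 1) N.le_succ).symm⟩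

end StableRange

section Subtower

variable {X : ℕ → Type u} {p : ∀ n, X (n + 1) → X n}
  (S : ∀ n, Set (X n)) (hS : ∀ n, MapsTo (p n) (S (n + 1)) (S n))

def restrictBond (n : ℕ) : S (n + 1) → S n :=
  MapsTo.restrict _ _ _ (hS n)

theorem coe_tbond_restrictBond {n m : ℕ} (h : n ≤ m) (y : S m) :
    (tbond (fun n => S n) (restrictBond S hS) h y : X n) = tbond X p h y := by
  induction m, h using Nat.le_induction with
  | base => rw [tbond_self, tbond_self]
  | succ m hnm ih => rw [tbond_succ hnm, tbond_succ hnm, ih]; rfl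

def subtowerInclusion : TowerMor (fun n => S n) (restrictBond S hS) X p where
  idx n := n
  f _ := Subtype.val
  coh _ n' h := ⟨n', h, le_rfl, fun y => by rw [tbond_self, coe_tbond_restrictBond]⟩

def subtowerRetraction (N : ℕ → ℕ) (hN : ∀ n, n ≤ N n)
    (hNS : ∀ n, range (tbond X p (hN n)) ⊆ S n) :
    TowerMor X p (fun n => S n) (restrictBond S hS) where
  idx := N
  f n x := ⟨tbond X p (hN n) x, hNS n (mem_range_self x)⟩
  coh n n' h := ⟨max (N n) (N n'), le_max_left _ _, le_max_right _ _, fun x =>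
    Subtype.ext (by simp only [coe_tbond_restrictBond, tbond_tbond])⟩

theorem towerIso_subtower (N : ℕ → ℕ) (hN : ∀ n, n ≤ N n)
    (hNS : ∀ n, range (tbond X p (hN n)) ⊆ S n) :
    TowerIso X p (fun n => S n) (restrictBond S hS) :=
  ⟨subtowerRetraction S hS N hN hNS, subtowerInclusion S hS,
    fun n => ⟨N n, Nat.le_refl (N n), hN n, fun x => congrArg _ (tbond_self _ x)⟩,
    fun n => ⟨N n, Nat.le_refl (N n), hN n, fun y => Subtype.ext <| by
      simp only [subtowerRetraction, subtowerInclusion]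
      rw [tbond_self, coe_tbond_restrictBond]⟩⟩

end Subtower

theorem TowerMor.range_f_subset_stableRange {X : ℕ → Type u} {p : ∀ n, X (n + 1) → X n}
    {Y : ℕ → Type v} {q : ∀ n, Y (n + 1) → Y n} (hq : ∀ n, Surjective (q n))
    (G : TowerMor Y q X p) (n : ℕ) : range (G.f n) ⊆ stableRange X p n := by
  rintro _ ⟨y, rfl⟩
  refine mem_iInter₂.2 fun m h => ?_
  obtain ⟨M, h₁, h₂, hcoh⟩ := G.coh n m h
  obtain ⟨z, rfl⟩ := tbond_surjective hq h₁ y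
  exact ⟨G.f m (tbond Y q h₂ z), (hcoh z).symm⟩

theorem isML_of_towerIso_of_surjective {X : ℕ → Type u} {p : ∀ n, X (n + 1) → X n}
    {Y : ℕ → Type v} {q : ∀ n, Y (n + 1) → Y n} (hq : ∀ n, Surjective (q n))
    (hXY : TowerIso X p Y q) : IsML X p := by
  obtain ⟨F, G, hGF, -⟩ := hXY
  refine isML_iff_exists_range_tbond_subset_stableRange.2 fun n => ?_
  obtain ⟨m, _, hnm, hid⟩ := hGF n
  refine ⟨m, hnm, ?_⟩
  rintro _ ⟨x, rfl⟩
  rw [← hid x]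
  exact G.range_f_subset_stableRange hq n (mem_range_self _)

/-- An inverse sequence of sets is Mittag-Leffler if and only if it is
isomorphic in `Tower-Set` to an inverse sequence with surjective bonding
maps. -/
theorem isML_iff_iso_to_surjective_tower
    (X : ℕ → Type u) (p : ∀ n, X (n + 1) → X n) :
    IsML X p ↔
      ∃ (Y : ℕ → Type u) (q : ∀ n, Y (n + 1) → Y n),
        (∀ n, Function.Surjective (q n)) ∧ TowerIso X p Y q := by
  refine ⟨fun hML => ?_, fun ⟨_, _, hq, hXY⟩ => isML_of_towerIso_of_surjective hq hXY⟩
  choose N hN hNS using isML_iff_exists_range_tbond_subset_stableRange.1 hML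
  refine ⟨fun n => stableRange X p n, restrictBond _ mapsTo_stableRange, fun n => ?_,
    towerIso_subtower _ mapsTo_stableRange N hN hNS⟩
  exact (MapsTo.restrict_surjective_iff _).2 (surjOn_stableRange (hN (n + 1)) (hNS (n + 1)))
end
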